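/- Let k ≥ 1 and let a_1 < a_2 < … < a_k be positive integers, A = {a_1,…,a_k}. In ℤ[[x,y]] put g_A(x;y) = ∑_{n≥0} ∑_{σ∈P_n^A} levels(σ)·x^n·y^{parts(σ)}. Then g_A(x;y) · ( 1 − y^2·∑_{i=1}^k x^{2a_i} )^2 = y^2·( 1 − y^2·∑_{i=1}^k x^{2a_i} )·( ∑_{i=1}^k x^{2a_i}(1 + 2x^{a_i}y) ) + 2y^4·( 1 + y·∑_{i=1}^k x^{a_i} )·( ∑_{i=1}^k x^{4a_i} ). -/

import Mathlib

open scoped Classical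

open MvPowerSeries

/-- Number of levels of a list (adjacent equal pairs). -/
def levelsL (l : List ℕ) : ℕ := (l.zip l.tail).countP (fun p => decide (p.1 = p.2))

/-- `∑_{n≥0} ∑_{σ∈P_n^A} levels(σ) x^n y^{parts(σ)}` in `ℤ[[x,y]]`, with
`x = X 0`, `y = X 1`. -/
noncomputable def gLevels {k : ℕ} (a : Fin k → ℕ) : MvPowerSeries (Fin 2) ℤ :=
  fun m => ((∑ c ∈ Finset.univ.filter (fun c : Composition (m 0) =>
      (∀ b ∈ c.blocks, ∃ i, a i = b) ∧ c.blocks.reverse = c.blocks ∧ c.length = m 1),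
      levelsL c.blocks : ℕ) : ℤ)

/-! ### List-level lemmas about `levelsL` -/

lemma levelsL_cons (y : ℕ) (t : List ℕ) :
    levelsL (y :: t) = (if t.head? = some y then 1 else 0) + levelsL t := by
  cases t with
  | nil => simp [levelsL]
  | cons z t' =>
    simp only [levelsL, List.zip, List.tail_cons, List.zipWith_cons_cons, List.countP_cons]
    simp only [List.head?_cons, Option.some.injEq]
    by_cases h : z = y
    · simp [h, Nat.add_comm]
    · simp [h]
      exact fun e => h e.symm

lemma levelsL_concat (l : List ℕ) (x : ℕ) :
    levelsL (l ++ [x]) = levelsL l + (if l.getLast? = some x then 1 else 0) := by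
  induction l with
  | nil => simp [levelsL]
  | cons y t ih =>
    rw [List.cons_append, levelsL_cons, ih, levelsL_cons]
    cases t with
    | nil => simp [levelsL, eq_comm]
    | cons z t' => simp [List.getLast?_cons_cons]; ring

lemma levelsL_wrap (x : ℕ) (l : List ℕ) (hpal : l.reverse = l) :
    levelsL (x :: l ++ [x]) =
      levelsL l + (if l = [] then 1 else if l.head? = some x then 2 else 0) := by
  rw [List.cons_append, levelsL_cons, levelsL_concat]
  have hgl : l.getLast? = l.head? := by
    conv_lhs => rw [← hpal]
    simp
  cases l with
  | nil => simp [levelsL]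
  | cons y t =>
    simp only [List.cons_append, List.head?_cons, hgl]
    by_cases h : y = x <;> simp [h, List.head?_cons] <;> ring

lemma levelsL_short {l : List ℕ} (h : l.length ≤ 1) : levelsL l = 0 := by
  cases l with
  | nil => rfl
  | cons y t =>
    cases t with
    | nil => rfl
    | cons z t' => simp at h

lemma pal_decomp' (bl : List ℕ) (hrev : bl.reverse = bl) (hlen : 2 ≤ bl.length) (x : ℕ)
    (hh : bl.head? = some x) : ∃ l, bl = x :: l ++ [x] ∧ l.reverse = l := by
  cases bl with
  | nil => simp at hh
  | cons b t =>
    simp only [List.head?_cons, Option.some.injEq] at hh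
    subst hh
    have ht : t ≠ [] := by
      intro h; subst h; simp at hlen
    have hgl : t.getLast? = some b := by
      have h1 : (b :: t).getLast? = (b :: t).head? := by
        conv_lhs => rw [← hrev]; rw [List.getLast?_reverse]
      rw [List.head?_cons, List.getLast?_cons, List.getLast?_eq_getLast ht] at h1
      simp only [Option.getD_some] at h1
      rw [List.getLast?_eq_getLast ht, h1]
    obtain ⟨l, hl⟩ : ∃ l, t = l ++ [b] := by
      refine ⟨t.dropLast, ?_⟩
      have h2 := List.dropLast_concat_getLast ht
      rw [List.getLast?_eq_getLast ht, Option.some.injEq] at hgl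
      rw [← hgl]
      exact h2.symm
    subst hl
    refine ⟨l, rfl, ?_⟩
    have h3 : (b :: (l ++ [b])).reverse = (b :: l.reverse) ++ [b] := by simp
    rw [h3] at hrev
    have h4 : (b :: l.reverse) ++ [b] = (b :: l) ++ [b] := by simpa using hrev
    have h5 := List.append_inj_left' h4 rfl
    exact (List.cons.injEq .. ▸ h5).2

/-! ### Finsets of palindromic compositions -/

section PalComb

variable {k : ℕ} (a : Fin k → ℕ)

/-- Palindromic compositions of `n` with parts in `A` and exactly `ℓ` parts. -/
noncomputable def palF (n ℓ : ℕ) : Finset (Composition n) :=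
  Finset.univ.filter (fun c : Composition n =>
    (∀ b ∈ c.blocks, ∃ i, a i = b) ∧ c.blocks.reverse = c.blocks ∧ c.length = ℓ)

lemma mem_palF {n ℓ : ℕ} {c : Composition n} :
    c ∈ palF a n ℓ ↔
      (∀ b ∈ c.blocks, ∃ i, a i = b) ∧ c.blocks.reverse = c.blocks ∧ c.blocks.length = ℓ := by
  simp [palF, Composition.length]

/-- The middle of a composition (strip first and last block), or junk. -/
noncomputable def midC (n d : ℕ) (c : Composition n) : Composition d :=
  if hc : (c.blocks.tail.dropLast).sum = d ∧ ∀ b ∈ c.blocks.tail.dropLast, 0 < b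
  then ⟨c.blocks.tail.dropLast, fun hb => hc.2 _ hb, hc.1⟩ else Composition.ones d

/-- Wrap a composition with a block `x` on both sides. -/
def wrapC (x n : ℕ) (hx : 0 < x) (h : 2 * x ≤ n) (c : Composition (n - 2 * x)) :
    Composition n where
  blocks := x :: c.blocks ++ [x]
  blocks_pos := by
    intro b hb
    simp only [List.cons_append, List.mem_cons, List.mem_append, List.mem_singleton,
      List.not_mem_nil, or_false] at hb
    rcases hb with rfl | hb | rfl
    · exact hx
    · exact c.blocks_pos hb
    · exact hx
  blocks_sum := by
    have := c.blocks_sum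
    simp only [List.cons_append, List.sum_cons, List.sum_append, List.sum_cons, List.sum_nil,
      this]
    omega

lemma wrapC_blocks (x n : ℕ) (hx : 0 < x) (h : 2 * x ≤ n) (c : Composition (n - 2 * x)) :
    (wrapC x n hx h c).blocks = x :: c.blocks ++ [x] := rfl

lemma mem_decomp (i : Fin k) {n ℓ : ℕ} (hℓ : 2 ≤ ℓ) {c : Composition n}
    (hc : c ∈ palF a n ℓ) (hh : c.blocks.head? = some (a i)) :
    ∃ l, c.blocks = a i :: l ++ [a i] ∧ l.reverse = l ∧ l.sum = n - 2 * a i ∧ 2 * a i ≤ n ∧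
      l.length = ℓ - 2 ∧ (∀ b ∈ l, ∃ j, a j = b) := by
  rw [mem_palF] at hc
  obtain ⟨hA, hrev, hlen⟩ := hc
  obtain ⟨l, hbl, hlrev⟩ := pal_decomp' c.blocks hrev (by omega) (a i) hh
  have hsum := c.blocks_sum
  rw [hbl] at hsum
  simp only [List.cons_append, List.sum_cons, List.sum_append, List.sum_cons, List.sum_nil,
    add_zero] at hsum
  have hlen' : l.length = ℓ - 2 := by
    rw [hbl] at hlen; simp at hlen; omega
  refine ⟨l, hbl, hlrev, by omega, by omega, hlen', ?_⟩
  intro b hb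
  exact hA b (by rw [hbl]; simp [hb])

lemma midC_blocks {n d : ℕ} (c : Composition n)
    (hc : (c.blocks.tail.dropLast).sum = d ∧ ∀ b ∈ c.blocks.tail.dropLast, 0 < b) :
    (midC n d c).blocks = c.blocks.tail.dropLast := by
  unfold midC
  rw [dif_pos hc]

lemma sum_head (hpos : ∀ i, 0 < a i) (i : Fin k) (n ℓ : ℕ) (hℓ : 2 ≤ ℓ) (f : List ℕ → ℤ) :
    ∑ c ∈ (palF a n ℓ).filter (fun c => c.blocks.head? = some (a i)), f c.blocks
    = if 2 * a i ≤ n then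
        ∑ c' ∈ palF a (n - 2 * a i) (ℓ - 2), f (a i :: c'.blocks ++ [a i]) else 0 := by
  by_cases h : 2 * a i ≤ n
  · rw [if_pos h]
    have key : ∀ c ∈ (palF a n ℓ).filter (fun c => c.blocks.head? = some (a i)),
        (c.blocks.tail.dropLast).sum = n - 2 * a i ∧
          (∀ b ∈ c.blocks.tail.dropLast, 0 < b) ∧
          c.blocks = a i :: c.blocks.tail.dropLast ++ [a i] ∧
          c.blocks.tail.dropLast.reverse = c.blocks.tail.dropLast ∧
          (c.blocks.tail.dropLast).length = ℓ - 2 ∧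
          (∀ b ∈ c.blocks.tail.dropLast, ∃ j, a j = b) := by
      intro c hc
      rw [Finset.mem_filter] at hc
      obtain ⟨hc, hh⟩ := hc
      obtain ⟨l, hbl, hlrev, hlsum, -, hlen, hA⟩ := mem_decomp a i hℓ hc hh
      have hmid : c.blocks.tail.dropLast = l := by rw [hbl]; simp
      rw [hmid]
      exact ⟨hlsum, fun b hb => c.blocks_pos (by rw [hbl]; simp [hb]), by rw [hbl],
        hlrev, hlen, hA⟩
    refine Finset.sum_nbij' (i := fun c => midC n (n - 2 * a i) c)
      (j := fun c' => wrapC (a i) n (hpos i) h c') ?_ ?_ ?_ ?_ ?_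
    · intro c hc
      obtain ⟨h1, h2, h3, h4, h5, h6⟩ := key c hc
      rw [mem_palF, midC_blocks c ⟨h1, h2⟩]
      exact ⟨h6, h4, h5⟩
    · intro c' hc'
      rw [mem_palF] at hc'
      obtain ⟨hA, hrev, hlen⟩ := hc'
      rw [Finset.mem_filter, mem_palF, wrapC_blocks]
      refine ⟨⟨?_, ?_, ?_⟩, by simp⟩
      · intro b hb
        simp only [List.cons_append, List.mem_cons, List.mem_append, List.mem_singleton,
          List.not_mem_nil, or_false] at hb
        rcases hb with rfl | hb | rfl
        · exact ⟨i, rfl⟩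
        · exact hA b hb
        · exact ⟨i, rfl⟩
      · simp [hrev]
      · have hle : (a i :: c'.blocks ++ [a i]).length = c'.blocks.length + 2 := by simp
        rw [hle, hlen]
        omega
    · intro c hc
      obtain ⟨h1, h2, h3, h4, h5, h6⟩ := key c hc
      apply Composition.ext
      rw [wrapC_blocks, midC_blocks c ⟨h1, h2⟩]
      exact h3.symm
    · intro c' hc'
      apply Composition.ext
      have hmid : (wrapC (a i) n (hpos i) h c').blocks.tail.dropLast = c'.blocks := by
        rw [wrapC_blocks]; simp
      rw [midC_blocks _ (by rw [hmid]; exact ⟨c'.blocks_sum, fun b hb => c'.blocks_pos hb⟩),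
        hmid]
    · intro c hc
      obtain ⟨h1, h2, h3, h4, h5, h6⟩ := key c hc
      rw [midC_blocks c ⟨h1, h2⟩]
      exact congrArg f h3
  · rw [if_neg h]
    have he : (palF a n ℓ).filter (fun c => c.blocks.head? = some (a i)) = ∅ := by
      rw [Finset.eq_empty_iff_forall_notMem]
      intro c hc
      rw [Finset.mem_filter] at hc
      obtain ⟨hc, hh⟩ := hc
      obtain ⟨l, -, -, -, hge, -, -⟩ := mem_decomp a i hℓ hc hh
      exact h hge
    rw [he, Finset.sum_empty]

lemma sum_split (hpos : ∀ i, 0 < a i) (hinj : Function.Injective a) (n ℓ : ℕ) (hℓ : 2 ≤ ℓ)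
    (f : List ℕ → ℤ) :
    ∑ c ∈ palF a n ℓ, f c.blocks
      = ∑ i : Fin k, if 2 * a i ≤ n then
          ∑ c' ∈ palF a (n - 2 * a i) (ℓ - 2), f (a i :: c'.blocks ++ [a i]) else 0 := by
  have step : ∀ c ∈ palF a n ℓ,
      f c.blocks = ∑ i : Fin k, if c.blocks.head? = some (a i) then f c.blocks else 0 := by
    intro c hc
    rw [mem_palF] at hc
    obtain ⟨hA, hrev, hlen⟩ := hc
    obtain ⟨b, t, hbt⟩ : ∃ b t, c.blocks = b :: t := by
      cases hbl : c.blocks with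
      | nil => rw [hbl] at hlen; simp at hlen; omega
      | cons b t => exact ⟨b, t, rfl⟩
    have hbmem : b ∈ c.blocks := by rw [hbt]; simp
    obtain ⟨i₀, hi₀⟩ := hA b hbmem
    rw [Finset.sum_eq_single i₀]
    · rw [hbt, List.head?_cons, hi₀, if_pos rfl]
    · intro j _ hj
      rw [hbt, List.head?_cons, if_neg]
      simp only [Option.some.injEq]
      intro e
      exact hj (hinj (by rw [hi₀, e]))
    · intro hmem
      exact absurd (Finset.mem_univ i₀) hmem
  rw [Finset.sum_congr rfl step, Finset.sum_comm]
  refine Finset.sum_congr rfl fun i _ => ?_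
  rw [← sum_head a hpos i n ℓ hℓ f, Finset.sum_filter]

lemma blocks_nil_of_len_zero {n : ℕ} {c : Composition n} (h : c ∈ palF a n 0) :
    c.blocks = [] := by
  rw [mem_palF] at h
  exact List.eq_nil_of_length_eq_zero h.2.2

lemma palF_zero (n : ℕ) : ((palF a n 0).card : ℤ) = if n = 0 then 1 else 0 := by
  by_cases hn : n = 0
  · subst hn
    rw [if_pos rfl]
    have huniv : palF a 0 0 = Finset.univ := by
      rw [Finset.eq_univ_iff_forall]
      intro c
      have hbl : c.blocks = [] := by
        have hs := c.blocks_sum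
        cases hbl : c.blocks with
        | nil => rfl
        | cons b t =>
          exfalso
          have hb : 0 < b := c.blocks_pos (by rw [hbl]; simp)
          rw [hbl] at hs
          simp only [List.sum_cons] at hs
          omega
      rw [mem_palF, hbl]
      simp
    rw [huniv]
    simp [Finset.card_univ, composition_card]
  · rw [if_neg hn]
    have he : palF a n 0 = ∅ := by
      rw [Finset.eq_empty_iff_forall_notMem]
      intro c hc
      have hbl := blocks_nil_of_len_zero a hc
      have hs := c.blocks_sum
      rw [hbl] at hs
      simp at hs
      exact hn hs.symm
    rw [he]
    simp

lemma palF_one_mem (hpos : ∀ i, 0 < a i) {n : ℕ} {c : Composition n} (h : c ∈ palF a n 1) :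
    c.blocks = [n] ∧ ∃ i, a i = n := by
  rw [mem_palF] at h
  obtain ⟨hA, -, hlen⟩ := h
  obtain ⟨b, hb⟩ : ∃ b, c.blocks = [b] := List.length_eq_one_iff.1 hlen
  have hs := c.blocks_sum
  rw [hb] at hs
  simp at hs
  subst hs
  exact ⟨hb, hA b (by rw [hb]; simp)⟩

lemma palF_one (hpos : ∀ i, 0 < a i) (hinj : Function.Injective a) (n : ℕ) :
    ((palF a n 1).card : ℤ) = ∑ i : Fin k, if n = a i then 1 else 0 := by
  by_cases hn : ∃ i, a i = n
  · obtain ⟨i₀, hi₀⟩ := hn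
    have hpos' : 0 < n := hi₀ ▸ hpos i₀
    have hset : palF a n 1 = {Composition.single n hpos'} := by
      ext c
      rw [Finset.mem_singleton, mem_palF]
      constructor
      · intro hc
        apply Composition.ext
        rw [Composition.single_blocks]
        exact (palF_one_mem a hpos (by rw [mem_palF]; exact hc)).1
      · intro hc
        subst hc
        rw [Composition.single_blocks]
        exact ⟨by simpa using ⟨i₀, hi₀⟩, rfl, rfl⟩
    have hsum : (∑ i : Fin k, if n = a i then (1 : ℤ) else 0) = 1 := by
      rw [Finset.sum_eq_single i₀]
      · rw [if_pos hi₀.symm]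
      · intro j _ hj
        exact if_neg (fun e => hj (hinj (by rw [hi₀, e])))
      · intro hmem
        exact absurd (Finset.mem_univ i₀) hmem
    rw [hset, hsum, Finset.card_singleton, Nat.cast_one]
  · have he : palF a n 1 = ∅ := by
      rw [Finset.eq_empty_iff_forall_notMem]
      intro c hc
      exact hn (palF_one_mem a hpos hc).2
    rw [he]
    push_neg at hn
    rw [Finset.sum_congr rfl (fun i _ => if_neg (fun e => hn i e.symm))]
    simp

lemma palFhead_zero (x n : ℕ) :
    (palF a n 0).filter (fun c => c.blocks.head? = some x) = ∅ := by
  rw [Finset.eq_empty_iff_forall_notMem]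
  intro c hc
  rw [Finset.mem_filter] at hc
  obtain ⟨hc, hh⟩ := hc
  rw [blocks_nil_of_len_zero a hc] at hh
  simp at hh

lemma palFhead_one (hpos : ∀ i, 0 < a i) (i : Fin k) (n : ℕ) :
    (((palF a n 1).filter (fun c => c.blocks.head? = some (a i))).card : ℤ)
      = if n = a i then 1 else 0 := by
  by_cases hn : n = a i
  · rw [if_pos hn]
    have hpos' : 0 < n := by rw [hn]; exact hpos i
    have hset : (palF a n 1).filter (fun c => c.blocks.head? = some (a i))
        = {Composition.single n hpos'} := by
      ext c
      rw [Finset.mem_singleton, Finset.mem_filter]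
      constructor
      · rintro ⟨hc, -⟩
        apply Composition.ext
        rw [Composition.single_blocks]
        exact (palF_one_mem a hpos hc).1
      · intro hc
        subst hc
        constructor
        · rw [mem_palF, Composition.single_blocks]
          exact ⟨by simpa using ⟨i, hn.symm⟩, rfl, rfl⟩
        · rw [Composition.single_blocks]
          simp [hn]
    rw [hset, Finset.card_singleton, Nat.cast_one]
  · rw [if_neg hn]
    have he : (palF a n 1).filter (fun c => c.blocks.head? = some (a i)) = ∅ := by
      rw [Finset.eq_empty_iff_forall_notMem]
      intro c hc
      rw [Finset.mem_filter] at hc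
      obtain ⟨hc, hh⟩ := hc
      obtain ⟨hbl, -⟩ := palF_one_mem a hpos hc
      rw [hbl] at hh
      simp only [List.head?_cons, Option.some.injEq] at hh
      exact hn hh
    rw [he]
    simp

/-! ### Coefficient functions -/

/-- Number of palindromic compositions (coefficients of `P`). -/
noncomputable def PC (n ℓ : ℕ) : ℤ := ((palF a n ℓ).card : ℤ)

/-- Number of palindromic compositions with first part `a i`. -/
noncomputable def FC (i : Fin k) (n ℓ : ℕ) : ℤ :=
  (((palF a n ℓ).filter (fun c => c.blocks.head? = some (a i))).card : ℤ)

/-- Total number of levels of palindromic compositions. -/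
noncomputable def GC (n ℓ : ℕ) : ℤ := ∑ c ∈ palF a n ℓ, (levelsL c.blocks : ℤ)

lemma keyP (hpos : ∀ i, 0 < a i) (hinj : Function.Injective a) (n ℓ : ℕ) :
    PC a n ℓ = (if n = 0 ∧ ℓ = 0 then 1 else 0)
      + (∑ i : Fin k, if n = a i ∧ ℓ = 1 then 1 else 0)
      + ∑ i : Fin k, (if 2 * a i ≤ n ∧ 2 ≤ ℓ then PC a (n - 2 * a i) (ℓ - 2) else 0) := by
  match ℓ with
  | 0 =>
    simp only [PC, palF_zero a n]
    simp
  | 1 =>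
    simp only [PC, palF_one a hpos hinj n]
    simp
  | (ℓ' + 2) =>
    have h2 : (2 : ℕ) ≤ ℓ' + 2 := by omega
    have hL : PC a n (ℓ' + 2) = ∑ c ∈ palF a n (ℓ' + 2), (1 : ℤ) := by
      rw [Finset.sum_const, nsmul_eq_mul, mul_one, PC]
    rw [hL, sum_split a hpos hinj n (ℓ' + 2) h2 (fun _ => (1 : ℤ))]
    have hfirst : (if n = 0 ∧ ℓ' + 2 = 0 then (1 : ℤ) else 0) = 0 := by simp
    have hsecond : (∑ i : Fin k, if n = a i ∧ ℓ' + 2 = 1 then (1 : ℤ) else 0) = 0 := by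
      refine Finset.sum_eq_zero fun i _ => by simp
    rw [hfirst, hsecond, zero_add, zero_add]
    refine Finset.sum_congr rfl fun i _ => ?_
    by_cases h : 2 * a i ≤ n
    · rw [if_pos h, if_pos ⟨h, h2⟩]
      rw [Finset.sum_const, nsmul_eq_mul, mul_one, PC]
    · rw [if_neg h, if_neg (fun hh => h hh.1)]

lemma keyF (hpos : ∀ i, 0 < a i) (i : Fin k) (n ℓ : ℕ) :
    FC a i n ℓ = (if n = a i ∧ ℓ = 1 then 1 else 0)
      + (if 2 * a i ≤ n ∧ 2 ≤ ℓ then PC a (n - 2 * a i) (ℓ - 2) else 0) := by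
  match ℓ with
  | 0 =>
    simp only [FC, palFhead_zero a (a i) n]
    simp
  | 1 =>
    simp only [FC, palFhead_one a hpos i n]
    simp
  | (ℓ' + 2) =>
    have h2 : (2 : ℕ) ≤ ℓ' + 2 := by omega
    have hL := sum_head a hpos i n (ℓ' + 2) h2 (fun _ => (1 : ℤ))
    have hL' : FC a i n (ℓ' + 2)
        = ∑ c ∈ (palF a n (ℓ' + 2)).filter (fun c => c.blocks.head? = some (a i)), (1 : ℤ) := by
      rw [Finset.sum_const, nsmul_eq_mul, mul_one, FC]
    rw [hL', hL]
    have hfirst : (if n = a i ∧ ℓ' + 2 = 1 then (1 : ℤ) else 0) = 0 := by simp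
    rw [hfirst, zero_add]
    by_cases h : 2 * a i ≤ n
    · rw [if_pos h, if_pos ⟨h, h2⟩]
      rw [Finset.sum_const, nsmul_eq_mul, mul_one, PC]
    · rw [if_neg h, if_neg (fun hh => h hh.1)]

lemma aux_ind (hpos : ∀ i, 0 < a i) (i : Fin k) (n ℓ : ℕ) :
    ∑ c ∈ palF a n ℓ,
        (if c.blocks = [] then (1 : ℤ) else if c.blocks.head? = some (a i) then 2 else 0)
      = (if n = 0 ∧ ℓ = 0 then 1 else 0) + (FC a i n ℓ + FC a i n ℓ) := by
  by_cases hℓ : ℓ = 0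
  · subst hℓ
    have hstep : ∀ c ∈ palF a n 0,
        (if c.blocks = [] then (1 : ℤ) else if c.blocks.head? = some (a i) then 2 else 0)
          = 1 := by
      intro c hc
      rw [if_pos (blocks_nil_of_len_zero a hc)]
    rw [Finset.sum_congr rfl hstep, Finset.sum_const, nsmul_eq_mul, mul_one]
    have hF : FC a i n 0 = 0 := by
      rw [FC, palFhead_zero a (a i) n]
      simp
    rw [hF]
    have := palF_zero a n
    rw [this]
    by_cases hn : n = 0 <;> simp [hn]
  · have hstep : ∀ c ∈ palF a n ℓ,
        (if c.blocks = [] then (1 : ℤ) else if c.blocks.head? = some (a i) then 2 else 0)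
          = (if c.blocks.head? = some (a i) then 2 else 0) := by
      intro c hc
      rw [mem_palF] at hc
      rw [if_neg]
      intro hnil
      rw [hnil] at hc
      exact hℓ hc.2.2.symm
    rw [Finset.sum_congr rfl hstep]
    rw [← Finset.sum_filter]
    rw [Finset.sum_const, nsmul_eq_mul, mul_comm]
    have h0 : (if n = 0 ∧ ℓ = 0 then (1 : ℤ) else 0) = 0 := by
      simp [hℓ]
    rw [h0, zero_add, FC]
    ring

lemma keyG (hpos : ∀ i, 0 < a i) (hinj : Function.Injective a) (n ℓ : ℕ) :
    GC a n ℓ = ∑ i : Fin k,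
      (if 2 * a i ≤ n ∧ 2 ≤ ℓ then
        GC a (n - 2 * a i) (ℓ - 2) + (if n - 2 * a i = 0 ∧ ℓ - 2 = 0 then 1 else 0)
          + (FC a i (n - 2 * a i) (ℓ - 2) + FC a i (n - 2 * a i) (ℓ - 2))
      else 0) := by
  by_cases hℓ : 2 ≤ ℓ
  · have hL := sum_split a hpos hinj n ℓ hℓ (fun bl => (levelsL bl : ℤ))
    rw [GC, hL]
    refine Finset.sum_congr rfl fun i _ => ?_
    by_cases h : 2 * a i ≤ n
    · rw [if_pos h, if_pos ⟨h, hℓ⟩]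
      have hstep : ∀ c' ∈ palF a (n - 2 * a i) (ℓ - 2),
          ((levelsL (a i :: c'.blocks ++ [a i]) : ℕ) : ℤ)
            = (levelsL c'.blocks : ℤ)
              + (if c'.blocks = [] then (1 : ℤ)
                 else if c'.blocks.head? = some (a i) then 2 else 0) := by
        intro c' hc'
        rw [mem_palF] at hc'
        rw [levelsL_wrap (a i) c'.blocks hc'.2.1]
        push_cast
        split_ifs <;> norm_num
      rw [Finset.sum_congr rfl hstep, Finset.sum_add_distrib]
      rw [aux_ind a hpos i (n - 2 * a i) (ℓ - 2)]
      rw [GC]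
      ring
    · rw [if_neg h, if_neg (fun hh => h hh.1)]
  · have hz : GC a n ℓ = 0 := by
      rw [GC]
      refine Finset.sum_eq_zero fun c hc => ?_
      rw [mem_palF] at hc
      have : levelsL c.blocks = 0 := levelsL_short (by omega)
      rw [this]
      simp
    rw [hz]
    refine (Finset.sum_eq_zero fun i _ => ?_).symm
    rw [if_neg (fun hh => hℓ hh.2)]

end PalComb

/-! ### Finsupp / coefficient helpers -/

lemma meq0 (m : Fin 2 →₀ ℕ) : m = 0 ↔ m 0 = 0 ∧ m 1 = 0 := by
  constructor
  · rintro rfl; simp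
  · rintro ⟨h0, h1⟩
    ext s
    fin_cases s
    · exact h0
    · exact h1

lemma dle (p q : ℕ) (m : Fin 2 →₀ ℕ) :
    (Finsupp.single (0 : Fin 2) p + Finsupp.single 1 q) ≤ m ↔ p ≤ m 0 ∧ q ≤ m 1 := by
  rw [Finsupp.le_def, Fin.forall_fin_two]
  simp [Finsupp.single_apply]

lemma dsub0 (p q : ℕ) (m : Fin 2 →₀ ℕ) :
    ((m - (Finsupp.single (0 : Fin 2) p + Finsupp.single 1 q) : Fin 2 →₀ ℕ)) 0 = m 0 - p := by
  rw [Finsupp.tsub_apply, Finsupp.add_apply]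
  simp [Finsupp.single_apply]

lemma dsub1 (p q : ℕ) (m : Fin 2 →₀ ℕ) :
    ((m - (Finsupp.single (0 : Fin 2) p + Finsupp.single 1 q) : Fin 2 →₀ ℕ)) 1 = m 1 - q := by
  rw [Finsupp.tsub_apply, Finsupp.add_apply]
  simp [Finsupp.single_apply]

lemma coeff_shift (p q : ℕ) (h : MvPowerSeries (Fin 2) ℤ) (m : Fin 2 →₀ ℕ) :
    MvPowerSeries.coeff m ((X 0) ^ p * (X 1) ^ q * h) =
      if p ≤ m 0 ∧ q ≤ m 1 then
        MvPowerSeries.coeff (m - (Finsupp.single 0 p + Finsupp.single 1 q)) h else 0 := by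
  rw [X_pow_eq, X_pow_eq, monomial_mul_monomial, one_mul, coeff_monomial_mul]
  simp only [dle, one_mul]

/-! ### The generating functions and their functional equations -/

section Series

variable {k : ℕ} (a : Fin k → ℕ)

/-- Counting series of palindromic compositions. -/
noncomputable def Pser : MvPowerSeries (Fin 2) ℤ := fun m => PC a (m 0) (m 1)

/-- Counting series of palindromic compositions with given first part. -/
noncomputable def Fser (i : Fin k) : MvPowerSeries (Fin 2) ℤ := fun m => FC a i (m 0) (m 1)

lemma coeff_Pser (m : Fin 2 →₀ ℕ) : MvPowerSeries.coeff m (Pser a) = PC a (m 0) (m 1) := rfl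

lemma coeff_Fser (i : Fin k) (m : Fin 2 →₀ ℕ) :
    MvPowerSeries.coeff m (Fser a i) = FC a i (m 0) (m 1) := rfl

lemma coeff_gLevels (m : Fin 2 →₀ ℕ) :
    MvPowerSeries.coeff m (gLevels a) = GC a (m 0) (m 1) := by
  show gLevels a m = GC a (m 0) (m 1)
  rw [gLevels, GC, palF]
  push_cast
  rfl

lemma seriesI1 (hpos : ∀ i, 0 < a i) (hinj : Function.Injective a) :
    Pser a = 1 + (∑ i : Fin k, (X 0 : MvPowerSeries (Fin 2) ℤ) ^ (a i) * (X 1) ^ 1 * 1)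
      + ∑ i : Fin k, (X 0 : MvPowerSeries (Fin 2) ℤ) ^ (2 * a i) * (X 1) ^ 2 * Pser a := by
  apply MvPowerSeries.ext
  intro m
  rw [map_add, map_add, map_sum, map_sum, MvPowerSeries.coeff_one, coeff_Pser]
  have h2 : ∀ i : Fin k, MvPowerSeries.coeff m
      ((X 0 : MvPowerSeries (Fin 2) ℤ) ^ (a i) * (X 1) ^ 1 * 1)
      = if m 0 = a i ∧ m 1 = 1 then 1 else 0 := by
    intro i
    rw [coeff_shift, MvPowerSeries.coeff_one]
    simp only [meq0, dsub0, dsub1]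
    split_ifs <;> omega
  have h3 : ∀ i : Fin k, MvPowerSeries.coeff m
      ((X 0 : MvPowerSeries (Fin 2) ℤ) ^ (2 * a i) * (X 1) ^ 2 * Pser a)
      = if 2 * a i ≤ m 0 ∧ 2 ≤ m 1 then PC a (m 0 - 2 * a i) (m 1 - 2) else 0 := by
    intro i
    rw [coeff_shift, coeff_Pser]
    simp only [dsub0, dsub1]
  rw [Finset.sum_congr rfl (fun i _ => h2 i), Finset.sum_congr rfl (fun i _ => h3 i)]
  simp only [meq0]
  exact keyP a hpos hinj (m 0) (m 1)

lemma seriesI2 (hpos : ∀ i, 0 < a i) (i : Fin k) :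
    Fser a i = (X 0 : MvPowerSeries (Fin 2) ℤ) ^ (a i) * (X 1) ^ 1 * 1
      + (X 0 : MvPowerSeries (Fin 2) ℤ) ^ (2 * a i) * (X 1) ^ 2 * Pser a := by
  apply MvPowerSeries.ext
  intro m
  rw [map_add, coeff_Fser]
  rw [coeff_shift, coeff_shift, MvPowerSeries.coeff_one, coeff_Pser]
  simp only [meq0, dsub0, dsub1]
  rw [keyF a hpos i (m 0) (m 1)]
  congr 1
  split_ifs <;> omega

lemma seriesI3 (hpos : ∀ i, 0 < a i) (hinj : Function.Injective a) :
    gLevels a = ∑ i : Fin k, (X 0 : MvPowerSeries (Fin 2) ℤ) ^ (2 * a i) * (X 1) ^ 2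
      * (gLevels a + 1 + (Fser a i + Fser a i)) := by
  apply MvPowerSeries.ext
  intro m
  rw [map_sum, coeff_gLevels]
  have h3 : ∀ i : Fin k, MvPowerSeries.coeff m
      ((X 0 : MvPowerSeries (Fin 2) ℤ) ^ (2 * a i) * (X 1) ^ 2
        * (gLevels a + 1 + (Fser a i + Fser a i)))
      = if 2 * a i ≤ m 0 ∧ 2 ≤ m 1 then
          GC a (m 0 - 2 * a i) (m 1 - 2)
            + (if m 0 - 2 * a i = 0 ∧ m 1 - 2 = 0 then 1 else 0)
            + (FC a i (m 0 - 2 * a i) (m 1 - 2) + FC a i (m 0 - 2 * a i) (m 1 - 2)) else 0 := by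
    intro i
    rw [coeff_shift]
    rw [map_add, map_add, map_add, coeff_gLevels, MvPowerSeries.coeff_one, coeff_Fser]
    simp only [meq0, dsub0, dsub1]
  rw [Finset.sum_congr rfl (fun i _ => h3 i)]
  exact keyG a hpos hinj (m 0) (m 1)

end Series

theorem stmt10 {k : ℕ} (hk : 1 ≤ k) (a : Fin k → ℕ) (hpos : ∀ i, 0 < a i)
    (hmono : StrictMono a) :
    gLevels a * (1 - (X 1) ^ 2 * ∑ i : Fin k, (X 0 : MvPowerSeries (Fin 2) ℤ) ^ (2 * a i)) ^ 2
      = (X 1) ^ 2 * (1 - (X 1) ^ 2 * ∑ i : Fin k, (X 0 : MvPowerSeries (Fin 2) ℤ) ^ (2 * a i))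
          * (∑ i : Fin k, (X 0 : MvPowerSeries (Fin 2) ℤ) ^ (2 * a i)
              * (1 + 2 * (X 0) ^ (a i) * X 1))
        + 2 * (X 1) ^ 4 * (1 + X 1 * ∑ i : Fin k, (X 0 : MvPowerSeries (Fin 2) ℤ) ^ (a i))
          * (∑ i : Fin k, (X 0 : MvPowerSeries (Fin 2) ℤ) ^ (4 * a i)) := by
  have hinj : Function.Injective a := hmono.injective
  have hA : Pser a = 1 + ((X 1 : MvPowerSeries (Fin 2) ℤ)
        * (∑ i : Fin k, (X 0 : MvPowerSeries (Fin 2) ℤ) ^ (a i))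
      + (X 1 : MvPowerSeries (Fin 2) ℤ) ^ 2
        * ((∑ i : Fin k, (X 0 : MvPowerSeries (Fin 2) ℤ) ^ (2 * a i)) * Pser a)) := by
    conv_lhs => rw [seriesI1 a hpos hinj]
    rw [add_assoc]
    congr 1
    rw [Finset.mul_sum, Finset.sum_mul, Finset.mul_sum, ← Finset.sum_add_distrib,
      ← Finset.sum_add_distrib]
    refine Finset.sum_congr rfl fun i _ => by ring
  have hB : (∑ i : Fin k, (X 0 : MvPowerSeries (Fin 2) ℤ) ^ (2 * a i) * Fser a i)
      = (X 1 : MvPowerSeries (Fin 2) ℤ)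
          * (∑ i : Fin k, (X 0 : MvPowerSeries (Fin 2) ℤ) ^ (3 * a i))
        + (X 1 : MvPowerSeries (Fin 2) ℤ) ^ 2
          * ((∑ i : Fin k, (X 0 : MvPowerSeries (Fin 2) ℤ) ^ (4 * a i)) * Pser a) := by
    rw [Finset.mul_sum, Finset.sum_mul, Finset.mul_sum, ← Finset.sum_add_distrib]
    refine Finset.sum_congr rfl fun i _ => ?_
    rw [seriesI2 a hpos i, show 3 * a i = 2 * a i + a i by ring,
      show 4 * a i = 2 * a i + 2 * a i by ring, pow_add, pow_add]
    ring
  have hC : gLevels a = (X 1 : MvPowerSeries (Fin 2) ℤ) ^ 2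
        * ((∑ i : Fin k, (X 0 : MvPowerSeries (Fin 2) ℤ) ^ (2 * a i)) * (gLevels a + 1))
      + 2 * (X 1 : MvPowerSeries (Fin 2) ℤ) ^ 2
        * (∑ i : Fin k, (X 0 : MvPowerSeries (Fin 2) ℤ) ^ (2 * a i) * Fser a i) := by
    conv_lhs => rw [seriesI3 a hpos hinj]
    rw [Finset.sum_mul, Finset.mul_sum, Finset.mul_sum, ← Finset.sum_add_distrib]
    refine Finset.sum_congr rfl fun i _ => by ring
  have hD : (∑ i : Fin k, (X 0 : MvPowerSeries (Fin 2) ℤ) ^ (2 * a i)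
        * (1 + 2 * (X 0) ^ (a i) * X 1))
      = (∑ i : Fin k, (X 0 : MvPowerSeries (Fin 2) ℤ) ^ (2 * a i))
        + 2 * (X 1 : MvPowerSeries (Fin 2) ℤ)
          * (∑ i : Fin k, (X 0 : MvPowerSeries (Fin 2) ℤ) ^ (3 * a i)) := by
    rw [Finset.mul_sum, ← Finset.sum_add_distrib]
    refine Finset.sum_congr rfl fun i _ => ?_
    rw [show 3 * a i = 2 * a i + a i by ring, pow_add]
    ring
  have h1 : gLevels a * (1 - (X 1 : MvPowerSeries (Fin 2) ℤ) ^ 2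
        * (∑ i : Fin k, (X 0 : MvPowerSeries (Fin 2) ℤ) ^ (2 * a i)))
      = (X 1 : MvPowerSeries (Fin 2) ℤ) ^ 2
          * (∑ i : Fin k, (X 0 : MvPowerSeries (Fin 2) ℤ) ^ (2 * a i))
        + 2 * (X 1 : MvPowerSeries (Fin 2) ℤ) ^ 3
          * (∑ i : Fin k, (X 0 : MvPowerSeries (Fin 2) ℤ) ^ (3 * a i))
        + 2 * (X 1 : MvPowerSeries (Fin 2) ℤ) ^ 4
          * ((∑ i : Fin k, (X 0 : MvPowerSeries (Fin 2) ℤ) ^ (4 * a i)) * Pser a) := by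
    linear_combination hC + 2 * (X 1 : MvPowerSeries (Fin 2) ℤ) ^ 2 * hB
  have h2 : Pser a * (1 - (X 1 : MvPowerSeries (Fin 2) ℤ) ^ 2
        * (∑ i : Fin k, (X 0 : MvPowerSeries (Fin 2) ℤ) ^ (2 * a i)))
      = 1 + (X 1 : MvPowerSeries (Fin 2) ℤ)
          * (∑ i : Fin k, (X 0 : MvPowerSeries (Fin 2) ℤ) ^ (a i)) := by
    linear_combination hA
  linear_combination
    (1 - (X 1 : MvPowerSeries (Fin 2) ℤ) ^ 2
        * (∑ i : Fin k, (X 0 : MvPowerSeries (Fin 2) ℤ) ^ (2 * a i))) * h1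
    + 2 * (X 1 : MvPowerSeries (Fin 2) ℤ) ^ 4
        * (∑ i : Fin k, (X 0 : MvPowerSeries (Fin 2) ℤ) ^ (4 * a i)) * h2
    - (X 1 : MvPowerSeries (Fin 2) ℤ) ^ 2
        * (1 - (X 1 : MvPowerSeries (Fin 2) ℤ) ^ 2
          * (∑ i : Fin k, (X 0 : MvPowerSeries (Fin 2) ℤ) ^ (2 * a i))) * hD
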